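/- Let N ≥ 1, S ≥ 1, and fix a lag ℓ with 0 ≤ ℓ < S. Let μ be a probability distribution on assignment matrices W : Fin N × Fin S → {0,1}. For each unit n and timestep s with s ≥ ℓ+1 (in 1-based indexing, i.e., s ∈ {ℓ+1,…,S}) let Y n s : ({0,1}-valued N×S matrices) → ℝ satisfy: for all W, W', if W n t = W' n t for every t ∈ {s−ℓ,…,s}, then Y n s W = Y n s W' (the outcome of pair (n,s) depends only on unit n's assignments in the window of length ℓ+1 ending at s; this encodes SUTVA, non-anticipation, and ℓ-bounded carryover). Assume that for every such (n,s) the probabilities π₁(n,s) := μ{W : W n t = 1 for all t ∈ {s−ℓ,…,s}} and π₀(n,s) := μ{W : W n t = 0 for all t ∈ {s−ℓ,…,s}} are both strictly positive. Define the lag-ℓ Horvitz–Thompson estimator τ̂_ℓ(W) = (1/(N·(S−ℓ))) · Σ_{n} Σ_{s=ℓ+1}^{S} Y n s W · [ 1{W n t = 1 ∀ t ∈ {s−ℓ,…,s}} / π₁(n,s) − 1{W n t = 0 ∀ t ∈ {s−ℓ,…,s}} / π₀(n,s) ] and the lag-ℓ average treatment effect τ_ℓ = (1/(N·(S−ℓ)))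 · Σ_{n} Σ_{s=ℓ+1}^{S} [ Y n s (all-ones matrix) − Y n s (all-zeros matrix) ]. Then the expectation of τ̂_ℓ under μ equals τ_ℓ. -/

import Mathlib

/-! Inverse-probability weighting: the indicator of the event "unit `n` is treated throughout the
window ending at `s`" has expectation `π₁ n s`, and on that event the outcome equals its value under
the all-ones assignment, because it only sees the window. Hence the treated term, weighted by
`1 / π₁ n s`, has expectation `Y n s 1`; likewise for control, and linearity of expectation does
the rest. -/

open Finset

section InverseProbabilityWeighting

variable {Ω : Type*} [Fintype Ω] (μ : Ω → ℝ)

theorem sum_mul_mul_indicator_eq_of_eqOn (Y : Ω → ℝ) (p : Ω → Prop) [DecidablePred p] (y : ℝ)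
    (hY : ∀ ω, p ω → Y ω = y) :
    ∑ ω, μ ω * (Y ω * if p ω then 1 else 0) = y * ∑ ω ∈ univ.filter p, μ ω := by
  rw [mul_sum, sum_filter]
  refine sum_congr rfl fun ω _ => ?_
  split_ifs with hω
  · rw [hY ω hω]; ring
  · ring

theorem sum_mul_mul_indicator_div_eq_of_eqOn (Y : Ω → ℝ) (p : Ω → Prop) [DecidablePred p]
    (y π : ℝ) (hπ : π = ∑ ω ∈ univ.filter p, μ ω) (hπ_ne : π ≠ 0) (hY : ∀ ω, p ω → Y ω = y) :
    ∑ ω, μ ω * (Y ω * ((if p ω then 1 else 0) / π)) = y := by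
  calc ∑ ω, μ ω * (Y ω * ((if p ω then 1 else 0) / π))
      = (∑ ω, μ ω * (Y ω * if p ω then 1 else 0)) / π := by
        rw [sum_div]
        exact sum_congr rfl fun ω _ => by ring
    _ = y := by
        rw [sum_mul_mul_indicator_eq_of_eqOn μ Y p y hY, ← hπ, mul_div_cancel_right₀ _ hπ_ne]

theorem sum_mul_horvitzThompson_eq (Y : Ω → ℝ) (p₁ p₀ : Ω → Prop) [DecidablePred p₁]
    [DecidablePred p₀] (y₁ y₀ π₁ π₀ : ℝ)
    (hπ₁ : π₁ = ∑ ω ∈ univ.filter p₁, μ ω) (hπ₁_ne : π₁ ≠ 0) (hY₁ : ∀ ω, p₁ ω → Y ω = y₁)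
    (hπ₀ : π₀ = ∑ ω ∈ univ.filter p₀, μ ω) (hπ₀_ne : π₀ ≠ 0) (hY₀ : ∀ ω, p₀ ω → Y ω = y₀) :
    ∑ ω, μ ω * (Y ω * ((if p₁ ω then 1 else 0) / π₁ - (if p₀ ω then 1 else 0) / π₀)) =
      y₁ - y₀ := by
  simp only [mul_sub, sum_sub_distrib,
    sum_mul_mul_indicator_div_eq_of_eqOn μ Y p₁ y₁ π₁ hπ₁ hπ₁_ne hY₁,
    sum_mul_mul_indicator_div_eq_of_eqOn μ Y p₀ y₀ π₀ hπ₀ hπ₀_ne hY₀]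

theorem sum_mul_const_mul_sum_sum {ι κ : Type*} [Fintype ι] (c : ℝ) (J : Finset κ)
    (f : ι → κ → Ω → ℝ) :
    ∑ ω, μ ω * (c * ∑ i, ∑ j ∈ J, f i j ω) = c * ∑ i, ∑ j ∈ J, ∑ ω, μ ω * f i j ω := by
  simp only [mul_sum, mul_left_comm (μ _) c]
  rw [sum_comm]
  exact sum_congr rfl fun i _ => sum_comm

end InverseProbabilityWeighting

theorem lagged_horvitz_thompson_unbiased_general
    (N S ℓ : ℕ)
    (μ : (Fin N × Fin S → Bool) → ℝ)
    (Y : Fin N → Fin S → (Fin N × Fin S → Bool) → ℝ)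
    (hY : ∀ (n : Fin N) (s : Fin S), ℓ ≤ s.val →
      ∀ (W W' : Fin N × Fin S → Bool),
        (∀ t : Fin S, s.val - ℓ ≤ t.val → t.val ≤ s.val → W (n, t) = W' (n, t)) →
        Y n s W = Y n s W')
    (π₁ π₀ : Fin N → Fin S → ℝ)
    (hπ₁ : ∀ n s, π₁ n s = ∑ W ∈ Finset.univ.filter
      (fun W : Fin N × Fin S → Bool =>
        ∀ t : Fin S, s.val - ℓ ≤ t.val → t.val ≤ s.val → W (n, t) = true), μ W)
    (hπ₀ : ∀ n s, π₀ n s = ∑ W ∈ Finset.univ.filter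
      (fun W : Fin N × Fin S → Bool =>
        ∀ t : Fin S, s.val - ℓ ≤ t.val → t.val ≤ s.val → W (n, t) = false), μ W)
    (hπ₁_pos : ∀ (n : Fin N) (s : Fin S), ℓ ≤ s.val → 0 < π₁ n s)
    (hπ₀_pos : ∀ (n : Fin N) (s : Fin S), ℓ ≤ s.val → 0 < π₀ n s) :
    ∑ W : Fin N × Fin S → Bool, μ W *
        ((1 / ((N : ℝ) * ((S : ℝ) - (ℓ : ℝ)))) * ∑ n : Fin N,
          ∑ s ∈ Finset.univ.filter (fun s : Fin S => ℓ ≤ s.val),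
            Y n s W *
              ((if ∀ t : Fin S, s.val - ℓ ≤ t.val → t.val ≤ s.val → W (n, t) = true
                  then (1 : ℝ) else 0) / π₁ n s -
               (if ∀ t : Fin S, s.val - ℓ ≤ t.val → t.val ≤ s.val → W (n, t) = false
                  then (1 : ℝ) else 0) / π₀ n s))
      = (1 / ((N : ℝ) * ((S : ℝ) - (ℓ : ℝ)))) * ∑ n : Fin N,
          ∑ s ∈ Finset.univ.filter (fun s : Fin S => ℓ ≤ s.val),
            (Y n s (fun _ => true) - Y n s (fun _ => false)) := by
  rw [sum_mul_const_mul_sum_sum]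
  congr 1
  refine sum_congr rfl fun n _ => sum_congr rfl fun s hs => ?_
  have hs : ℓ ≤ s.val := (mem_filter.1 hs).2
  exact sum_mul_horvitzThompson_eq μ (Y n s) _ _ _ _ _ _
    (hπ₁ n s) (hπ₁_pos n s hs).ne' (fun W hW => hY n s hs W _ hW)
    (hπ₀ n s) (hπ₀_pos n s hs).ne' (fun W hW => hY n s hs W _ hW)

/-- **Unbiasedness of the lag-ℓ Horvitz–Thompson estimator under SUTVA,
non-anticipation and ℓ-bounded carryover effects.**  Assignment matrices are
`W : Fin N × Fin S → Bool` (0-based time indexing: the timesteps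
`s` with `ℓ ≤ s.val` correspond to the 1-based timesteps `ℓ+1,…,S`).
Each potential outcome `Y n s` (for `ℓ ≤ s.val`) depends only on unit `n`'s
assignments in the window `{s-ℓ,…,s}`, and the window exposure probabilities
`π₁ n s`, `π₀ n s` are strictly positive.  Then the expectation of the lag-ℓ
Horvitz–Thompson estimator equals the lag-ℓ average treatment effect. -/
theorem lagged_horvitz_thompson_unbiased
    (N S ℓ : ℕ) (hN : 1 ≤ N) (hS : 1 ≤ S) (hℓ : ℓ < S)
    (μ : (Fin N × Fin S → Bool) → ℝ)
    (hμ_nonneg : ∀ W, 0 ≤ μ W)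
    (hμ_sum : ∑ W : Fin N × Fin S → Bool, μ W = 1)
    (Y : Fin N → Fin S → (Fin N × Fin S → Bool) → ℝ)
    (hY : ∀ (n : Fin N) (s : Fin S), ℓ ≤ s.val →
      ∀ (W W' : Fin N × Fin S → Bool),
        (∀ t : Fin S, s.val - ℓ ≤ t.val → t.val ≤ s.val → W (n, t) = W' (n, t)) →
        Y n s W = Y n s W')
    (π₁ π₀ : Fin N → Fin S → ℝ)
    (hπ₁ : ∀ n s, π₁ n s = ∑ W ∈ Finset.univ.filter
      (fun W : Fin N × Fin S → Bool =>
        ∀ t : Fin S, s.val - ℓ ≤ t.val → t.val ≤ s.val → W (n, t) = true), μ W)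
    (hπ₀ : ∀ n s, π₀ n s = ∑ W ∈ Finset.univ.filter
      (fun W : Fin N × Fin S → Bool =>
        ∀ t : Fin S, s.val - ℓ ≤ t.val → t.val ≤ s.val → W (n, t) = false), μ W)
    (hπ₁_pos : ∀ (n : Fin N) (s : Fin S), ℓ ≤ s.val → 0 < π₁ n s)
    (hπ₀_pos : ∀ (n : Fin N) (s : Fin S), ℓ ≤ s.val → 0 < π₀ n s) :
    ∑ W : Fin N × Fin S → Bool, μ W *
        ((1 / ((N : ℝ) * ((S : ℝ) - (ℓ : ℝ)))) * ∑ n : Fin N,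
          ∑ s ∈ Finset.univ.filter (fun s : Fin S => ℓ ≤ s.val),
            Y n s W *
              ((if ∀ t : Fin S, s.val - ℓ ≤ t.val → t.val ≤ s.val → W (n, t) = true
                  then (1 : ℝ) else 0) / π₁ n s -
               (if ∀ t : Fin S, s.val - ℓ ≤ t.val → t.val ≤ s.val → W (n, t) = false
                  then (1 : ℝ) else 0) / π₀ n s))
      = (1 / ((N : ℝ) * ((S : ℝ) - (ℓ : ℝ)))) * ∑ n : Fin N,
          ∑ s ∈ Finset.univ.filter (fun s : Fin S => ℓ ≤ s.val),
            (Y n s (fun _ => true) - Y n s (fun _ => false)) :=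
  lagged_horvitz_thompson_unbiased_general N S ℓ μ Y hY π₁ π₀ hπ₁ hπ₀ hπ₁_pos hπ₀_pos
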